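/- Let (Q, f) be a triangulation quiver with at least three vertices such that g³ is the identity on Q₁. Then Q contains no loops, i.e., there is no arrow α with s(α) = t(α). (Step in the proof of Lemma 6.6, implication (iii) ⇒ (ii).) -/

import Mathlib

/-- A triangulation quiver: a finite connected 2-regular quiver `(V, A, s, t)` together
with a permutation `f` of the arrows satisfying `s (f a) = t a` and `f ∘ f ∘ f = id`.
The field `bar` records, for each arrow `a`, the unique arrow `ᾱ ≠ α` with the same
source (it exists and is unique by 2-regularity), together with its defining properties. -/
structure TriangulationQuiver where
  V : Type
  A : Type
  fintypeV : Fintype V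
  fintypeA : Fintype A
  s : A → V
  t : A → V
  two_regular_src : ∀ v : V, Set.ncard {a : A | s a = v} = 2
  two_regular_tgt : ∀ v : V, Set.ncard {a : A | t a = v} = 2
  connected : ∀ u v : V,
    Relation.ReflTransGen (fun x y => ∃ a : A, (s a = x ∧ t a = y) ∨ (s a = y ∧ t a = x)) u v
  f : A → A
  f_cube : ∀ a : A, f (f (f a)) = a
  s_f : ∀ a : A, s (f a) = t a
  bar : A → A
  bar_src : ∀ a : A, s (bar a) = s a
  bar_ne : ∀ a : A, bar a ≠ a
  bar_unique : ∀ a b : A, s b = s a → b ≠ a → b = bar a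

attribute [instance] TriangulationQuiver.fintypeV TriangulationQuiver.fintypeA

namespace TriangulationQuiver

variable (Q : TriangulationQuiver)

/-- The second permutation of arrows: `g α = \overline{f α}`. -/
def g (a : Q.A) : Q.A := Q.bar (Q.f a)

/-- The `g`-orbit of an arrow. -/
def gOrbit (a : Q.A) : Set Q.A := {b : Q.A | ∃ k : ℕ, Q.g^[k] a = b}

/-- `n α` is the number of arrows in the `g`-orbit of `α`. -/
noncomputable def n (a : Q.A) : ℕ := (Q.gOrbit a).ncard

end TriangulationQuiver

/-!
Loops and fixed points of `f` go together: a loop `α` has `f α ∈ {α, ᾱ}`, and when `g³ = 1` an arrow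
with `f α = ᾱ` produces a fixed point of `f`. If `f α = α`, then `g³ α = α` forces the `f`-orbit
`(ᾱ, β, β̄)` of `ᾱ` to contain a loop `β` at `y = t ᾱ` and an arrow `β̄ : y → s α`. So every arrow
leaving `{s α, y}` stays in it; by 2-regularity (as many arrows end in a vertex set as start there)
the same holds for arrows entering it, and connectedness leaves no room for a third vertex.
-/

open Finset

theorem mem_of_map_mem_of_card_fiber_eq {α β : Type*} [Fintype α] [DecidableEq β]
    {p q : α → β} (hpq : ∀ y, #{x | p x = y} = #{x | q x = y}) {S : Finset β}
    (hS : ∀ x, p x ∈ S → q x ∈ S) {x : α} (hx : q x ∈ S) : p x ∈ S := by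
  have hsub : univ.filter (fun x => p x ∈ S) ⊆ univ.filter (fun x => q x ∈ S) := fun y hy => by
    simpa using hS y (by simpa using hy)
  have hcard : #{x | q x ∈ S} ≤ #{x | p x ∈ S} := by
    simp only [← sum_card_fiberwise_eq_card_filter, hpq, le_refl]
  have hx' : x ∈ univ.filter (fun x => q x ∈ S) := by simpa using hx
  rw [← eq_of_subset_of_card_le hsub hcard] at hx'
  simpa using hx'

namespace TriangulationQuiver

variable {Q : TriangulationQuiver}

theorem f_injective : Function.Injective Q.f :=
  Function.LeftInverse.injective (g := fun a => Q.f (Q.f a)) Q.f_cube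

theorem bar_involutive : Function.Involutive Q.bar := fun a =>
  (Q.bar_unique (Q.bar a) a (Q.bar_src a).symm (Q.bar_ne a).symm).symm

theorem bar_g (a : Q.A) : Q.bar (Q.g a) = Q.f a :=
  bar_involutive _

theorem eq_or_eq_bar_of_s_eq {a e : Q.A} (h : Q.s e = Q.s a) : e = a ∨ e = Q.bar a :=
  or_iff_not_imp_left.2 (Q.bar_unique a e h)

theorem t_eq_s_f (a : Q.A) : Q.t a = Q.s (Q.f a) :=
  (Q.s_f a).symm

theorem f_eq_self_or_f_eq_bar_of_s_eq_t {a : Q.A} (h : Q.s a = Q.t a) :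
    Q.f a = a ∨ Q.f a = Q.bar a :=
  eq_or_eq_bar_of_s_eq (by rw [Q.s_f, h])

theorem card_filter_s_eq_card_filter_t [DecidableEq Q.V] (v : Q.V) :
    #{a | Q.s a = v} = #{a | Q.t a = v} := by
  have hs := Q.two_regular_src v
  have ht := Q.two_regular_tgt v
  simp only [Set.ncard_eq_toFinset_card', Set.toFinset_ofPred] at hs ht
  rw [hs, ht]

theorem mem_of_forall_t_mem {S : Finset Q.V} {x : Q.V} (hx : x ∈ S)
    (hS : ∀ a, Q.s a ∈ S → Q.t a ∈ S) (v : Q.V) : v ∈ S := by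
  classical
  have hS' : ∀ a, Q.t a ∈ S → Q.s a ∈ S := fun _ =>
    mem_of_map_mem_of_card_fiber_eq card_filter_s_eq_card_filter_t hS
  induction Q.connected x v with
  | refl => exact hx
  | tail _ hstep ih =>
    obtain ⟨a, ⟨rfl, rfl⟩ | ⟨rfl, rfl⟩⟩ := hstep
    exacts [hS a ih, hS' a ih]

theorem f_f_bar_eq_bar_f_bar {a : Q.A} (hfa : Q.f a = a) (hg : Q.g (Q.g (Q.g a)) = a) :
    Q.f (Q.f (Q.bar a)) = Q.bar (Q.f (Q.bar a)) := by
  rw [show Q.g a = Q.bar a by rw [g, hfa]] at hg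
  have h : Q.f (Q.g (Q.bar a)) = Q.f (Q.f (Q.f (Q.bar a))) := by
    rw [← bar_g, hg, Q.f_cube]
  exact (f_injective h).symm

theorem f_g_bar_eq_g_bar {a : Q.A} (hfa : Q.f a = Q.bar a)
    (hg : Q.g (Q.g (Q.g (Q.bar a))) = Q.bar a) :
    Q.f (Q.g (Q.bar a)) = Q.g (Q.bar a) := by
  have hffb : Q.f (Q.f (Q.bar a)) = a := by rw [← hfa, Q.f_cube]
  have h : Q.f (Q.g (Q.g (Q.bar a))) = Q.f (Q.f (Q.bar a)) := by
    rw [← bar_g, hg, bar_involutive, hffb]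
  calc Q.f (Q.g (Q.bar a)) = Q.bar (Q.g (Q.g (Q.bar a))) := (bar_g _).symm
    _ = Q.g (Q.bar a) := by rw [f_injective h]; rfl

theorem exists_f_eq_self_of_s_eq_t (hg : ∀ a : Q.A, Q.g (Q.g (Q.g a)) = a) {a : Q.A}
    (ha : Q.s a = Q.t a) : ∃ e, Q.f e = e := by
  rcases f_eq_self_or_f_eq_bar_of_s_eq_t ha with hfa | hfa
  · exact ⟨a, hfa⟩
  · exact ⟨_, f_g_bar_eq_g_bar hfa (hg _)⟩

theorem card_V_le_two_of_f_eq_self (hg : ∀ a : Q.A, Q.g (Q.g (Q.g a)) = a) {a : Q.A}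
    (hfa : Q.f a = a) : Fintype.card Q.V ≤ 2 := by
  classical
  set b := Q.bar a
  set c := Q.f b
  have hfc : Q.f c = Q.bar c := f_f_bar_eq_bar_f_bar hfa (hg a)
  have hfbc : Q.f (Q.bar c) = b := by rw [← hfc, Q.f_cube]
  have hclosed : ∀ e, Q.s e ∈ ({Q.s a, Q.s c} : Finset Q.V) →
      Q.t e ∈ ({Q.s a, Q.s c} : Finset Q.V) := by
    intro e he
    simp only [mem_insert, mem_singleton] at he ⊢
    rcases he with he | he <;> rcases eq_or_eq_bar_of_s_eq he with rfl | rfl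
    · exact Or.inl (by rw [t_eq_s_f, hfa])
    · exact Or.inr (t_eq_s_f b)
    · exact Or.inr (by rw [t_eq_s_f, hfc, Q.bar_src])
    · exact Or.inl (by rw [t_eq_s_f, hfbc, Q.bar_src])
  calc Fintype.card Q.V = #(univ : Finset Q.V) := rfl
    _ ≤ #{Q.s a, Q.s c} := card_le_card fun v _ =>
      mem_of_forall_t_mem (mem_insert_self _ _) hclosed v
    _ ≤ 2 := card_le_two

end TriangulationQuiver

/-- Step in the proof of Lemma 6.6, (iii) ⇒ (ii): a triangulation quiver with at least
three vertices on which `g³` is the identity contains no loops. -/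
theorem stmt_3 (Q : TriangulationQuiver) (h3 : 3 ≤ Fintype.card Q.V)
    (hg : ∀ a : Q.A, Q.g (Q.g (Q.g a)) = a) :
    ∀ a : Q.A, Q.s a ≠ Q.t a := by
  intro a ha
  obtain ⟨e, hfe⟩ := TriangulationQuiver.exists_f_eq_self_of_s_eq_t hg ha
  have := TriangulationQuiver.card_V_le_two_of_f_eq_self hg hfe
  omega
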